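/- Let G be a finite simple graph that is not complete, let G be chordal, and let d be the largest cardinality of a clique in G. Then b_i ≤ d_i(G) for every i = 1, …, d. -/

import Mathlib

open Finset

/-- `G` is chordal: every cycle of length at least 4 has a chord, i.e. an edge
joining two non-consecutive vertices of the cycle. -/
def IsChordal {V : Type*} (G : SimpleGraph V) : Prop :=
  ∀ (n : ℕ), 4 ≤ n → ∀ f : ZMod n → V, Function.Injective f →
    (∀ i : ZMod n, G.Adj (f i) (f (i + 1))) →
    ∃ i j : ZMod n, i ≠ j ∧ i + 1 ≠ j ∧ j + 1 ≠ i ∧ G.Adj (f i) (f j)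

/-- The number of cliques of `G` with exactly `i` vertices. -/
noncomputable def cliqueCount {V : Type*} [Fintype V] (G : SimpleGraph V) (i : ℕ) : ℕ :=
  {s : Finset V | G.IsNClique i s}.ncard

/-- `W(G - Y)`: the number of connected components of the subgraph of `G` induced on the
complement of `Y`. -/
noncomputable def numComponents {V : Type*} [Fintype V] [DecidableEq V] (G : SimpleGraph V)
    (Y : Finset V) : ℕ :=
  Nat.card (G.induce (↑(Yᶜ) : Set V)).ConnectedComponent

/-- A vertex-cut of `G`: a set of vertices whose removal disconnects `G`. -/
def IsVertexCut {V : Type*} [Fintype V] [DecidableEq V] (G : SimpleGraph V) (Y : Finset V) :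
    Prop :=
  ¬ (G.induce (↑(Yᶜ) : Set V)).Connected

/-- The vertex connectivity `κ(G)`: the minimum cardinality of a vertex-cut. -/
noncomputable def vertexConnectivity {V : Type*} [Fintype V] [DecidableEq V]
    (G : SimpleGraph V) : ℕ :=
  sInf {k | ∃ Y : Finset V, IsVertexCut G Y ∧ Y.card = k}

/-- `s` is a maximal clique of `G`. -/
def IsMaxCliqueOf {V : Type*} (G : SimpleGraph V) (s : Finset V) : Prop :=
  G.IsClique (↑s : Set V) ∧ ∀ t : Finset V, G.IsClique (↑t : Set V) → s ⊆ t → s = t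

/-- A dominating `i`-clique of `G`: a set of `i`-cliques such that every maximal clique of
order at least `i` contains some member of the set. -/
def IsDominatingCliqueSet {V : Type*} (G : SimpleGraph V) (i : ℕ)
    (D : Finset (Finset V)) : Prop :=
  (∀ s ∈ D, G.IsNClique i s) ∧
    ∀ t : Finset V, IsMaxCliqueOf G t → i ≤ t.card → ∃ s ∈ D, s ⊆ t

/-- `d_i(G)`: the minimum cardinality of a dominating `i`-clique of `G`. -/
noncomputable def domNum {V : Type*} (G : SimpleGraph V) (i : ℕ) : ℕ :=
  sInf {k | ∃ D : Finset (Finset V), IsDominatingCliqueSet G i D ∧ D.card = k}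

/-- `κ̃(G)`: the maximum cardinality of the intersection of a pair of distinct maximal
cliques of `G`. -/
noncomputable def kappaTilde {V : Type*} [DecidableEq V] (G : SimpleGraph V) : ℕ :=
  sSup {k | ∃ C C' : Finset V, IsMaxCliqueOf G C ∧ IsMaxCliqueOf G C' ∧ C ≠ C' ∧
    (C ∩ C').card = k}

/-- `G` restricted to the vertex set `s` is a threshold graph: it can be built from a
one-vertex graph by repeatedly adding either an isolated vertex or a vertex adjacent to
all existing vertices. -/
inductive IsThresholdOn {V : Type*} [DecidableEq V] (G : SimpleGraph V) : Finset V → Prop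
  | single (v : V) : IsThresholdOn G {v}
  | isolated (s : Finset V) (v : V) (hv : v ∉ s) (hs : IsThresholdOn G s)
      (hiso : ∀ u ∈ s, ¬ G.Adj v u) : IsThresholdOn G (insert v s)
  | dominating (s : Finset V) (v : V) (hv : v ∉ s) (hs : IsThresholdOn G s)
      (hdom : ∀ u ∈ s, G.Adj v u) : IsThresholdOn G (insert v s)

/-- `G` is a threshold graph. -/
def IsThreshold {V : Type*} [Fintype V] [DecidableEq V] (G : SimpleGraph V) : Prop :=
  IsThresholdOn G Finset.univ

/-- `|C_i(G)|`: the number of maximal cliques of `G` with exactly `i` vertices. -/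
noncomputable def maxCliqueCount {V : Type*} [Fintype V] (G : SimpleGraph V) (i : ℕ) : ℕ :=
  {s : Finset V | IsMaxCliqueOf G s ∧ s.card = i}.ncard

/-- `s` is a maximal clique of `G` among the cliques contained in `W`, i.e. a facet of the
restriction of the clique complex of `G` to `W`. -/
def IsMaxCliqueWithin {V : Type*} (G : SimpleGraph V) (W : Finset V) (s : Finset V) : Prop :=
  s ⊆ W ∧ G.IsClique (↑s : Set V) ∧
    ∀ t : Finset V, t ⊆ W → G.IsClique (↑t : Set V) → s ⊆ t → s = t

/-- The restriction of the clique complex of `G` to `W` is pure: all its facets have the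
same cardinality. -/
def PureOn {V : Type*} (G : SimpleGraph V) (W : Finset V) : Prop :=
  ∀ s t : Finset V, IsMaxCliqueWithin G W s → IsMaxCliqueWithin G W t → s.card = t.card

/-!
A chordal graph has a simplicial vertex `v` (Dirac): for nonadjacent `a`, `b`, every vertex of a
minimal `a`–`b` separator has neighbours on both sides, and two shortest paths through the two
sides between nonadjacent separator vertices would close up to a chordless cycle; so the separator
is a clique, and induction inside the two sides yields simplicial vertices there.

Let `m` be the degree of `v`. The cliques containing `v` are `v` together with any subset of its
neighbourhood, so deleting `v` removes `(x + 1) ^ m` from `∑ cᵢ xⁱ⁻¹` and hence the unit vector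
`e_{m+1}` from the `b`-vector. The closed neighbourhood of `v` is the only maximal clique
containing `v`, so a dominating `i`-clique of `G` gives one of `G - v` of no larger size, and of
strictly smaller size when `i = m + 1`. Induction on the number of vertices gives `bᵢ ≤ dᵢ(G)`.
-/

namespace SimpleGraph

variable {V : Type*} {G : SimpleGraph V}

def restrict (G : SimpleGraph V) (U : Set V) : SimpleGraph V where
  Adj x y := G.Adj x y ∧ x ∈ U ∧ y ∈ U
  symm := ⟨fun _ _ h => ⟨h.1.symm, h.2.2, h.2.1⟩⟩
  loopless := ⟨fun _ h => G.irrefl h.1⟩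

@[simp]
lemma restrict_adj {U : Set V} {x y : V} :
    (G.restrict U).Adj x y ↔ G.Adj x y ∧ x ∈ U ∧ y ∈ U := Iff.rfl

lemma restrict_le (U : Set V) : G.restrict U ≤ G := fun _ _ h => h.1

lemma restrict_mono {U U' : Set V} (h : U ⊆ U') : G.restrict U ≤ G.restrict U' :=
  fun _ _ hxy => ⟨hxy.1, h hxy.2.1, h hxy.2.2⟩

lemma Reachable.mem_of_adj_closed {H : SimpleGraph V} {C : Set V} {a b : V}
    (hC : ∀ x y, H.Adj x y → x ∈ C → y ∈ C) (h : H.Reachable a b) (ha : a ∈ C) : b ∈ C := by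
  obtain ⟨w⟩ := h
  induction w with
  | nil => exact ha
  | cons hxy _ ih => exact ih (hC _ _ hxy ha)

lemma Reachable.mem_of_restrict {U : Set V} {a b : V} (h : (G.restrict U).Reachable a b)
    (ha : a ∈ U) : b ∈ U :=
  h.mem_of_adj_closed (fun _ _ hxy _ => (restrict_adj.mp hxy).2.2) ha

lemma Reachable.restrict_setOf_reachable {H : SimpleGraph V} {a x : V} (h : H.Reachable a x) :
    (H.restrict {y | H.Reachable a y}).Reachable a x := by
  obtain ⟨w⟩ := h.symm
  clear h
  suffices (H.restrict {y | H.Reachable a y}).Reachable x a from this.symm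
  induction w with
  | nil => rfl
  | cons hxy p ih =>
    have hx := (Walk.cons hxy p).reverse.reachable
    exact (Adj.reachable (restrict_adj.mpr ⟨hxy, hx, p.reverse.reachable⟩)).trans ih

lemma exists_adj_of_reachable_restrict_insert {U : Set V} {a b s : V} (ha : a ∈ U)
    (hsep : ¬(G.restrict U).Reachable a b) (h : (G.restrict (insert s U)).Reachable a b) :
    ∃ u ∈ {u | (G.restrict U).Reachable a u}, G.Adj s u := by
  by_contra! hs
  refine hsep (h.mem_of_adj_closed (C := {u | (G.restrict U).Reachable a u}) ?_ (Reachable.refl a))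
  intro x y hxy hx
  obtain ⟨hxy', -, hy⟩ := restrict_adj.mp hxy
  rcases hy with rfl | hy
  · exact absurd hxy'.symm (hs x hx)
  · exact hx.trans (Adj.reachable (restrict_adj.mpr ⟨hxy', hx.mem_of_restrict ha, hy⟩))

lemma reachable_restrict_setOf_reachable {H : SimpleGraph V} (hH : H ≤ G) {a x y : V}
    (hx : H.Reachable a x) (hy : H.Reachable a y) :
    (G.restrict {u | H.Reachable a u}).Reachable x y :=
  (hx.restrict_setOf_reachable.symm.trans hy.restrict_setOf_reachable).mono
    fun _ _ h => restrict_adj.mpr ⟨hH (restrict_adj.mp h).1, (restrict_adj.mp h).2⟩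

namespace Walk

def IsInduced {u v : V} (p : G.Walk u v) : Prop :=
  ∀ i j, i < j → j ≤ p.length →
    (p.getVert i = p.getVert j ∨ G.Adj (p.getVert i) (p.getVert j)) → j = i + 1

lemma IsInduced.getVert_ne {u v : V} {p : G.Walk u v} (hp : p.IsInduced) {i j : ℕ} (hij : i < j)
    (hj : j ≤ p.length) : p.getVert i ≠ p.getVert j := by
  intro h
  obtain rfl := hp i j hij hj (.inl h)
  exact (p.adj_getVert_succ (by omega)).ne h

lemma isInduced_of_length_eq_dist {u v : V} (p : G.Walk u v) (hp : p.length = G.dist u v) :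
    p.IsInduced := by
  intro i j hij hj h
  by_contra hne
  obtain ⟨q, hq⟩ : ∃ q : G.Walk u v, q.length < p.length := by
    rcases h with h | h
    · refine ⟨(p.take i).append ((p.drop j).copy h.symm rfl), ?_⟩
      simp only [length_append, length_copy, take_length, drop_length]
      omega
    · refine ⟨(p.take i).append (cons h (p.drop j)), ?_⟩
      simp only [length_append, length_cons, take_length, drop_length]
      omega
  have := G.dist_le q
  omega

end Walk

lemma exists_isInduced_walk_interior_subset {C : Set V} {s t : V}
    (hC : ∀ x ∈ C, ∀ y ∈ C, (G.restrict C).Reachable x y)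
    (hs : ∃ u ∈ C, G.Adj s u) (ht : ∃ u ∈ C, G.Adj t u) :
    ∃ p : G.Walk s t, p.IsInduced ∧ ∀ i, 0 < i → i < p.length → p.getVert i ∈ C := by
  obtain ⟨u, hu, hsu⟩ := hs
  obtain ⟨u', hu', htu'⟩ := ht
  set U : Set V := insert s (insert t C)
  have hCU : C ⊆ U := fun x hx => .inr (.inr hx)
  have hreach : (G.restrict U).Reachable s t :=
    (Adj.reachable (restrict_adj.mpr ⟨hsu, .inl rfl, hCU hu⟩)).trans <|
      ((hC u hu u' hu').mono (restrict_mono hCU)).trans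
      (Adj.reachable (restrict_adj.mpr ⟨htu'.symm, hCU hu', .inr (.inl rfl)⟩))
  obtain ⟨p, hp⟩ := hreach.exists_walk_length_eq_dist
  have hpU : ∀ i, p.getVert i ∈ U := fun i =>
    (p.take i).reachable.mem_of_restrict (.inl rfl)
  have hind := p.isInduced_of_length_eq_dist hp
  refine ⟨p.mapLe (restrict_le U), ?_, ?_⟩
  · intro i j hij hj h
    simp only [Walk.getVert_map, Walk.length_map] at h hj
    refine hind i j hij hj (h.imp_right fun h => restrict_adj.mpr ⟨h, hpU i, hpU j⟩)
  · intro i hi hi'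
    simp only [Walk.getVert_map, Walk.length_map] at hi' ⊢
    rcases hpU i with h | h | h
    · exact absurd (h.trans p.getVert_zero.symm) (hind.getVert_ne hi (by omega)).symm
    · exact absurd (h.trans p.getVert_length.symm) (hind.getVert_ne hi' le_rfl)
    · exact h

end SimpleGraph

open SimpleGraph

namespace IsChordal

variable {V : Type*} {G : SimpleGraph V}

lemma exists_chord (hG : IsChordal G) {n : ℕ} (hn : 4 ≤ n) {f : ℕ → V}
    (hf : Set.InjOn f (Set.Iio n)) (hadj : ∀ i < n, G.Adj (f i) (f (i + 1))) (hn0 : f n = f 0) :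
    ∃ i j, i + 2 ≤ j ∧ j < n ∧ (0 < i ∨ j + 1 < n) ∧ G.Adj (f i) (f j) := by
  have : NeZero n := ⟨by omega⟩
  have hval : ∀ x : ZMod n, (x + 1).val = (x.val + 1) % n := fun x => by
    rw [ZMod.val_add, ZMod.val_one'' (by omega)]
  have hstep : ∀ k < n, f ((k + 1) % n) = f (k + 1) := fun k hk => by
    rcases Nat.lt_or_ge (k + 1) n with h | h
    · rw [Nat.mod_eq_of_lt h]
    · rw [show k + 1 = n by omega, Nat.mod_self, hn0]
  have hinj : Function.Injective (f ∘ ZMod.val : ZMod n → V) := fun x y h =>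
    ZMod.val_injective n (hf (ZMod.val_lt x) (ZMod.val_lt y) h)
  obtain ⟨x, y, hne, hxy, hyx, hchord⟩ := hG n hn (f ∘ ZMod.val) hinj fun x => by
    simpa [hval, hstep x.val (ZMod.val_lt x)] using hadj x.val (ZMod.val_lt x)
  have chord_of_val_lt : ∀ x y : ZMod n, x.val < y.val → x + 1 ≠ y → y + 1 ≠ x →
      G.Adj (f x.val) (f y.val) →
      ∃ i j, i + 2 ≤ j ∧ j < n ∧ (0 < i ∨ j + 1 < n) ∧ G.Adj (f i) (f j) := by
    intro x y hlt hxy hyx h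
    have hy := ZMod.val_lt y
    refine ⟨x.val, y.val, ?_, hy, ?_, h⟩
    · by_contra hle
      apply hxy (ZMod.val_injective n _)
      rw [hval, Nat.mod_eq_of_lt (by omega)]
      omega
    · by_contra hle
      apply hyx (ZMod.val_injective n _)
      rw [hval, show y.val + 1 = n by omega, Nat.mod_self]
      omega
  rcases lt_or_gt_of_ne (fun h => hne (ZMod.val_injective n h) : x.val ≠ y.val) with h | h
  · exact chord_of_val_lt x y h hxy hyx hchord
  · exact chord_of_val_lt y x h hyx hxy hchord.symm

theorem adj_of_isInduced (hG : IsChordal G) {s t : V} (hst : s ≠ t) {p q : G.Walk s t}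
    (hp : p.IsInduced) (hq : q.IsInduced)
    (hpq : ∀ i j, 0 < i → i < p.length → 0 < j → j < q.length →
      p.getVert i ≠ q.getVert j ∧ ¬G.Adj (p.getVert i) (q.getVert j)) :
    G.Adj s t := by
  by_contra hst'
  set k := p.length
  set m := q.length
  have hk : 2 ≤ k := by
    have h0 : k ≠ 0 := fun h => hst (Walk.eq_of_length_eq_zero h)
    have h1 : k ≠ 1 := fun h => hst' (Walk.adj_of_length_eq_one h)
    omega
  have hm : 2 ≤ m := by
    have h0 : m ≠ 0 := fun h => hst (Walk.eq_of_length_eq_zero h)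
    have h1 : m ≠ 1 := fun h => hst' (Walk.adj_of_length_eq_one h)
    omega
  set n := k + m
  -- the cycle `s = p₀, …, p_k = t = q_m, q_{m-1}, …, q₀ = s`
  set f : ℕ → V := fun i => if i ≤ k then p.getVert i else q.getVert (n - i)
  have hfp : ∀ i ≤ k, f i = p.getVert i := fun i hi => if_pos hi
  have hfq : ∀ i, k ≤ i → f i = q.getVert (n - i) := fun i hi => by
    rcases hi.lt_or_eq with h | rfl
    · exact if_neg (by omega)
    · rw [hfp k le_rfl, show n - k = m by omega, p.getVert_length, q.getVert_length]
  have hf0 : f n = f 0 := by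
    rw [hfq n (by omega), hfp 0 (by omega), Nat.sub_self, p.getVert_zero, q.getVert_zero]
  have hadj : ∀ i < n, G.Adj (f i) (f (i + 1)) := fun i hi => by
    rcases Nat.lt_or_ge i k with hik | hki
    · rw [hfp i hik.le, hfp (i + 1) hik]
      exact p.adj_getVert_succ hik
    · rw [hfq i hki, hfq (i + 1) (by omega)]
      have := q.adj_getVert_succ (i := n - (i + 1)) (by omega)
      rwa [show n - (i + 1) + 1 = n - i by omega, adj_comm] at this
  have linked : ∀ i j, i < j → j < n → (f i = f j ∨ G.Adj (f i) (f j)) →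
      j = i + 1 ∨ (i = 0 ∧ j + 1 = n) := by
    intro i j hij hjn h
    rcases le_or_gt j k with hjk | hkj
    · rw [hfp i (by omega), hfp j hjk] at h
      exact .inl (hp i j hij hjk h)
    rcases le_or_gt k i with hki | hik
    · rw [hfq i hki, hfq j hkj.le, eq_comm, adj_comm] at h
      have := hq (n - j) (n - i) (by omega) (by omega) h
      omega
    rcases Nat.eq_zero_or_pos i with rfl | hi
    · rw [hfp 0 (by omega), p.getVert_zero, ← q.getVert_zero, hfq j hkj.le] at h
      have := hq 0 (n - j) (by omega) (by omega) h
      omega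
    · rw [hfp i hik.le, hfq j hkj.le] at h
      have := hpq i (n - j) hi hik (by omega) (by omega)
      tauto
  have hinj : Set.InjOn f (Set.Iio n) := by
    have hne : ∀ i j, i < j → j < n → f i ≠ f j := fun i j hij hjn h => by
      rcases linked i j hij hjn (.inl h) with rfl | ⟨rfl, hj⟩
      · exact (hadj i (by omega)).ne h
      · exact (hadj j hjn).ne (by rw [hj, hf0, h])
    intro i hi j hj h
    by_contra hij
    rcases Nat.lt_or_gt_of_ne hij with hij | hij
    · exact hne i j hij hj h
    · exact hne j i hij hi h.symm
  obtain ⟨i, j, hij, hjn, hij', hchord⟩ := hG.exists_chord (by omega) hinj hadj hf0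
  have := linked i j (by omega) hjn (.inr hchord)
  omega

theorem isClique_of_forall_exists_adj (hG : IsChordal G) {A B S : Set V}
    (hA : ∀ x ∈ A, ∀ y ∈ A, (G.restrict A).Reachable x y)
    (hB : ∀ x ∈ B, ∀ y ∈ B, (G.restrict B).Reachable x y)
    (hAB : ∀ x ∈ A, ∀ y ∈ B, x ≠ y ∧ ¬G.Adj x y)
    (hSA : ∀ s ∈ S, ∃ u ∈ A, G.Adj s u) (hSB : ∀ s ∈ S, ∃ u ∈ B, G.Adj s u) :
    G.IsClique S := by
  intro s hs t ht hst
  obtain ⟨p, hp, hpA⟩ := exists_isInduced_walk_interior_subset hA (hSA s hs) (hSA t ht)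
  obtain ⟨q, hq, hqB⟩ := exists_isInduced_walk_interior_subset hB (hSB s hs) (hSB t ht)
  exact hG.adj_of_isInduced hst hp hq fun i j hi hi' hj hj' =>
    hAB _ (hpA i hi hi') _ (hqB j hj hj')

end IsChordal

section Simplicial

open scoped Classical

variable {V : Type*} {G : SimpleGraph V}

def IsSimplicialIn (G : SimpleGraph V) (W : Finset V) (v : V) : Prop :=
  G.IsClique (↑({x ∈ W | G.Adj v x}) : Set V)

def IsCliqueOrHasTwoSimplicial (G : SimpleGraph V) (W : Finset V) : Prop :=
  G.IsClique (W : Set V) ∨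
    ∃ x ∈ W, ∃ y ∈ W, x ≠ y ∧ ¬G.Adj x y ∧ IsSimplicialIn G W x ∧ IsSimplicialIn G W y

lemma ne_and_not_adj_of_not_reachable {U : Set V} {a b x y : V} (ha : a ∈ U) (hb : b ∈ U)
    (hab : ¬(G.restrict U).Reachable a b) (hx : (G.restrict U).Reachable a x)
    (hy : (G.restrict U).Reachable b y) : x ≠ y ∧ ¬G.Adj x y := by
  refine ⟨fun hxy => hab (hx.trans (hxy ▸ hy.symm)), fun hxy => hab ?_⟩
  exact hx.trans ((Adj.reachable (restrict_adj.mpr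
    ⟨hxy, hx.mem_of_restrict ha, hy.mem_of_restrict hb⟩)).trans hy.symm)

lemma exists_minimal_separator {W : Finset V} {a b : V} (hab : a ≠ b) (hnadj : ¬G.Adj a b) :
    ∃ S ⊆ W, a ∉ S ∧ b ∉ S ∧ ¬(G.restrict ↑(W \ S)).Reachable a b ∧
      ∀ s ∈ S, (G.restrict (insert s ↑(W \ S))).Reachable a b := by
  have hsep : ¬(G.restrict ↑(W \ (W \ {a, b}))).Reachable a b := by
    intro h
    refine hab (h.mem_of_adj_closed (C := {a}) (fun x y hxy hx => ?_) rfl).symm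
    obtain rfl := hx
    simp only [restrict_adj, coe_sdiff, Set.mem_sdiff, mem_coe] at hxy
    have hy : y ∈ ({x, b} : Finset V) := by_contra fun h' => hxy.2.2.2 ⟨hxy.2.2.1, h'⟩
    rcases mem_insert.mp hy with rfl | hy
    · exact (G.irrefl hxy.1).elim
    · exact (hnadj (mem_singleton.mp hy ▸ hxy.1)).elim
  obtain ⟨S, hS, hSmin⟩ := exists_min_image
    {S ∈ (W \ {a, b}).powerset | ¬(G.restrict ↑(W \ S)).Reachable a b} card
    ⟨W \ {a, b}, mem_filter.mpr ⟨mem_powerset_self _, hsep⟩⟩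
  obtain ⟨hSsub, hsepS⟩ := mem_filter.mp hS
  have hSsub := mem_powerset.mp hSsub
  obtain ⟨hSW, haS, hbS⟩ : S ⊆ W ∧ a ∉ S ∧ b ∉ S := by
    simpa [subset_sdiff, disjoint_insert_right] using hSsub
  refine ⟨S, hSW, haS, hbS, hsepS, fun s hs => ?_⟩
  by_contra h
  rw [← coe_insert, ← sdiff_erase (hSW hs)] at h
  have := hSmin (S.erase s)
    (mem_filter.mpr ⟨mem_powerset.mpr ((erase_subset s S).trans hSsub), h⟩)
  have := card_erase_lt_of_mem hs
  omega

lemma IsChordal.isClique_of_minimal_separator (hG : IsChordal G) {U S : Set V} {a b : V}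
    (ha : a ∈ U) (hb : b ∈ U) (hsep : ¬(G.restrict U).Reachable a b)
    (hmin : ∀ s ∈ S, (G.restrict (insert s U)).Reachable a b) : G.IsClique S :=
  hG.isClique_of_forall_exists_adj
    (fun _ hx _ hy => reachable_restrict_setOf_reachable (restrict_le _) hx hy)
    (fun _ hx _ hy => reachable_restrict_setOf_reachable (restrict_le _) hx hy)
    (fun _ hx _ hy => ne_and_not_adj_of_not_reachable ha hb hsep hx hy)
    (fun s hs => exists_adj_of_reachable_restrict_insert ha hsep (hmin s hs))
    (fun s hs => exists_adj_of_reachable_restrict_insert hb (fun h => hsep h.symm) (hmin s hs).symm)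

lemma exists_isSimplicialIn_of_component {W S : Finset V} {a : V} (hS : G.IsClique (S : Set V))
    (ha : a ∈ W \ S)
    (hW' : IsCliqueOrHasTwoSimplicial G {x ∈ W | x ∈ S ∨ (G.restrict ↑(W \ S)).Reachable a x}) :
    ∃ x, (G.restrict ↑(W \ S)).Reachable a x ∧ IsSimplicialIn G W x := by
  set R := G.restrict ↑(W \ S)
  set W' := {x ∈ W | x ∈ S ∨ R.Reachable a x}
  have hlift : ∀ x, R.Reachable a x → IsSimplicialIn G W' x → IsSimplicialIn G W x := by
    intro x hx hsx
    refine hsx.subset fun y hy => ?_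
    simp only [coe_filter, Set.mem_ofPred_eq, W', mem_filter] at hy ⊢
    refine ⟨⟨hy.1, ?_⟩, hy.2⟩
    by_cases hyS : y ∈ S
    · exact .inl hyS
    · refine .inr (hx.trans (Adj.reachable (restrict_adj.mpr ⟨hy.2, hx.mem_of_restrict ?_, ?_⟩)))
      · simpa using ha
      · simp [hy.1, hyS]
  rcases hW' with hclq | ⟨x, hx, y, hy, hxy, hnadj, hsx, hsy⟩
  · exact ⟨a, Reachable.refl a,
      hlift a (Reachable.refl a) (hclq.subset (coe_subset.mpr (filter_subset _ _)))⟩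
  · have hreach : ∀ z ∈ W', z ∉ S → R.Reachable a z := fun z hz hzS => by
      simp only [W', mem_filter] at hz
      tauto
    by_cases hxS : x ∈ S
    · have hyS : y ∉ S := fun hyS => hnadj (hS hxS hyS hxy)
      exact ⟨y, hreach y hy hyS, hlift y (hreach y hy hyS) hsy⟩
    · exact ⟨x, hreach x hx hxS, hlift x (hreach x hx hxS) hsx⟩

theorem IsChordal.isCliqueOrHasTwoSimplicial (hG : IsChordal G) (W : Finset V) :
    IsCliqueOrHasTwoSimplicial G W := by
  induction W using Finset.strongInduction with
  | H W ih =>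
  by_cases hW : G.IsClique (W : Set V)
  · exact .inl hW
  obtain ⟨a, ha, b, hb, hab, hnadj⟩ : ∃ a ∈ W, ∃ b ∈ W, a ≠ b ∧ ¬G.Adj a b := by
    simpa [IsClique, Set.Pairwise] using hW
  obtain ⟨S, hSW, haS, hbS, hsep, hmin⟩ := exists_minimal_separator (W := W) hab hnadj
  have haR : a ∈ W \ S := mem_sdiff.mpr ⟨ha, haS⟩
  have hbR : b ∈ W \ S := mem_sdiff.mpr ⟨hb, hbS⟩
  have hS := hG.isClique_of_minimal_separator (mem_coe.mpr haR) (mem_coe.mpr hbR) hsep hmin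
  obtain ⟨x, hx, hsx⟩ := exists_isSimplicialIn_of_component hS haR
    (ih _ (filter_ssubset.mpr ⟨b, hb, not_or.mpr ⟨hbS, hsep⟩⟩))
  obtain ⟨y, hy, hsy⟩ := exists_isSimplicialIn_of_component hS hbR
    (ih _ (filter_ssubset.mpr ⟨a, ha, not_or.mpr ⟨haS, fun h => hsep h.symm⟩⟩))
  have hxy := ne_and_not_adj_of_not_reachable (mem_coe.mpr haR) (mem_coe.mpr hbR) hsep hx hy
  exact .inr ⟨x, (mem_sdiff.mp (hx.mem_of_restrict haR)).1, y,
    (mem_sdiff.mp (hy.mem_of_restrict hbR)).1, hxy.1, hxy.2, hsx, hsy⟩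

theorem IsChordal.exists_isSimplicialIn (hG : IsChordal G) {W : Finset V} (hW : W.Nonempty) :
    ∃ v ∈ W, IsSimplicialIn G W v := by
  rcases hG.isCliqueOrHasTwoSimplicial W with hclq | ⟨x, hx, -, -, -, -, hsx, -⟩
  · obtain ⟨v, hv⟩ := hW
    exact ⟨v, hv, hclq.subset (coe_subset.mpr (filter_subset _ _))⟩
  · exact ⟨x, hx, hsx⟩

lemma IsSimplicialIn.isClique_insert_iff {W : Finset V} {v : V} (hsimp : IsSimplicialIn G W v)
    {t : Finset V} (ht : t ⊆ W.erase v) :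
    G.IsClique (↑(insert v t) : Set V) ↔ t ⊆ {x ∈ W | G.Adj v x} := by
  rw [coe_insert, isClique_insert]
  refine ⟨fun h x hx => ?_,
    fun h => ⟨hsimp.subset (coe_subset.mpr h), fun x hx _ => (mem_filter.mp (h hx)).2⟩⟩
  obtain ⟨hxv, hxW⟩ := mem_erase.mp (ht hx)
  exact mem_filter.mpr ⟨hxW, h.2 x hx hxv.symm⟩

end Simplicial

section CliquePolynomial

open Polynomial
open scoped Classical

variable {V : Type*} {G : SimpleGraph V}

/-- `∑ᵢ cᵢ xⁱ⁻¹` for the induced subgraph `G[W]`, the right-hand side of the `b`-vector identity. -/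
noncomputable def cliquePolyOn (G : SimpleGraph V) (W : Finset V) : ℤ[X] :=
  ∑ s ∈ W.powerset.filter fun s : Finset V => G.IsClique (s : Set V) ∧ s.Nonempty, X ^ (#s - 1)

/-- `∑ᵢ bᵢ xⁱ⁻¹` for `G[W]`: the coefficient of `xʲ` is `b_{j+1}`. -/
noncomputable def bPolyOn (G : SimpleGraph V) (W : Finset V) : ℤ[X] :=
  (cliquePolyOn G W).comp (X - 1)

@[simp]
lemma cliquePolyOn_empty : cliquePolyOn G ∅ = 0 := by
  simp [cliquePolyOn, filter_singleton]

lemma IsSimplicialIn.cliquePolyOn_eq_add {W : Finset V} {v : V} (hsimp : IsSimplicialIn G W v)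
    (hv : v ∈ W) :
    cliquePolyOn G W = cliquePolyOn G (W.erase v) + (X + 1) ^ #{x ∈ W | G.Adj v x} := by
  set N := {x ∈ W | G.Adj v x}
  have hNW : N ⊆ W.erase v := fun x hx =>
    mem_erase.mpr ⟨fun h => G.irrefl (h ▸ (mem_filter.mp hx).2), (mem_filter.mp hx).1⟩
  have hsum : ∑ t ∈ (W.erase v).powerset,
      (if G.IsClique (↑(insert v t) : Set V) ∧ (insert v t).Nonempty
        then (X : ℤ[X]) ^ (#(insert v t) - 1) else 0) = ∑ t ∈ N.powerset, X ^ #t := by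
    have hfilter : {t ∈ (W.erase v).powerset | t ⊆ N} = N.powerset := by
      ext t
      simpa using fun h : t ⊆ N => h.trans hNW
    rw [← hfilter, sum_filter]
    refine sum_congr rfl fun t ht => ?_
    have ht := mem_powerset.mp ht
    have hvt : v ∉ t := fun h => (mem_erase.mp (ht h)).1 rfl
    simp only [hsimp.isClique_insert_iff ht, insert_nonempty, and_true,
      card_insert_of_notMem hvt, Nat.add_sub_cancel, N]
  rw [cliquePolyOn, cliquePolyOn, sum_filter, sum_filter]
  conv_lhs => rw [← insert_erase hv, sum_powerset_insert (notMem_erase v W)]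
  rw [hsum, ← sum_pow_mul_eq_add_pow X 1 N]
  simp

lemma IsSimplicialIn.coeff_bPolyOn_eq_add {W : Finset V} {v : V} (hsimp : IsSimplicialIn G W v)
    (hv : v ∈ W) (j : ℕ) : (bPolyOn G W).coeff j =
      (bPolyOn G (W.erase v)).coeff j + if j = #{x ∈ W | G.Adj v x} then 1 else 0 := by
  rw [bPolyOn, bPolyOn, hsimp.cliquePolyOn_eq_add hv, add_comp, pow_comp, add_comp, X_comp,
    one_comp, sub_add_cancel, coeff_add, coeff_X_pow]

lemma cliquePolyOn_univ [Fintype V] {d : ℕ} (hdmax : ∀ m s, G.IsNClique m s → m ≤ d) :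
    cliquePolyOn G univ = ∑ i ∈ Icc 1 d, C (cliqueCount G i : ℤ) * X ^ (i - 1) := by
  rw [cliquePolyOn, ← sum_fiberwise_of_maps_to (g := card) (t := Icc 1 d) fun s hs => ?_]
  · refine sum_congr rfl fun i hi => ?_
    have hcount : (↑(((univ : Finset V).powerset.filter fun s : Finset V =>
        G.IsClique (s : Set V) ∧ s.Nonempty).filter fun s => #s = i) : Set (Finset V)) =
        {s | G.IsNClique i s} := by
      ext s
      simp only [coe_filter, mem_filter, mem_powerset, subset_univ, true_and, Set.mem_ofPred_eq,
        isNClique_iff]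
      refine ⟨fun ⟨⟨h1, _⟩, h2⟩ => ⟨h1, h2⟩, fun ⟨h1, h2⟩ => ⟨⟨h1, card_pos.mp ?_⟩, h2⟩⟩
      have := (mem_Icc.mp hi).1
      omega
    rw [sum_congr rfl fun s hs => by rw [(mem_filter.mp hs).2], sum_const, cliqueCount,
      ← hcount, Set.ncard_coe_finset, nsmul_eq_mul, ← map_natCast C]
  · obtain ⟨hclq, hne⟩ := (mem_filter.mp hs).2
    exact mem_Icc.mpr ⟨card_pos.mpr hne, hdmax _ s ⟨hclq, rfl⟩⟩

lemma bPolyOn_univ [Fintype V] {d : ℕ} (hdmax : ∀ m s, G.IsNClique m s → m ≤ d) {b : ℕ → ℤ}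
    (hb : ∀ x : ℤ, ∑ i ∈ Icc 1 d, b i * (x + 1) ^ (i - 1) =
      ∑ i ∈ Icc 1 d, (cliqueCount G i : ℤ) * x ^ (i - 1)) :
    bPolyOn G univ = ∑ i ∈ Icc 1 d, C (b i) * X ^ (i - 1) := by
  have hpoly : ∑ i ∈ Icc 1 d, C (b i) * (X + 1) ^ (i - 1) = cliquePolyOn G univ := by
    rw [cliquePolyOn_univ hdmax]
    exact Polynomial.funext fun x => by simpa [eval_finsetSum] using hb x
  simp [bPolyOn, ← hpoly, Polynomial.sum_comp, mul_comp, pow_comp]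

end CliquePolynomial

section Domination

open scoped Classical

variable {V : Type*} {G : SimpleGraph V}

def IsDominatingCliqueSetOn (G : SimpleGraph V) (W : Finset V) (i : ℕ)
    (D : Finset (Finset V)) : Prop :=
  (∀ s ∈ D, G.IsNClique i s) ∧ ∀ t, IsMaxCliqueWithin G W t → i ≤ #t → ∃ s ∈ D, s ⊆ t

noncomputable def domNumOn (G : SimpleGraph V) (W : Finset V) (i : ℕ) : ℕ :=
  sInf {k | ∃ D, IsDominatingCliqueSetOn G W i D ∧ #D = k}

lemma exists_isDominatingCliqueSetOn_card_eq (G : SimpleGraph V) (W : Finset V) (i : ℕ) :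
    ∃ D, IsDominatingCliqueSetOn G W i D ∧ #D = domNumOn G W i := by
  have hall : IsDominatingCliqueSetOn G W i {s ∈ W.powerset | G.IsNClique i s} := by
    refine ⟨fun s hs => (mem_filter.mp hs).2, fun t ht hit => ?_⟩
    obtain ⟨s, hst, hs⟩ := exists_subset_card_eq hit
    exact ⟨s, mem_filter.mpr ⟨mem_powerset.mpr (hst.trans ht.1),
      ⟨ht.2.1.subset (coe_subset.mpr hst), hs⟩⟩, hst⟩
  exact Nat.sInf_mem (s := {k | ∃ D, IsDominatingCliqueSetOn G W i D ∧ #D = k}) ⟨_, _, hall, rfl⟩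

lemma domNumOn_le_card {W : Finset V} {i : ℕ} {D : Finset (Finset V)}
    (hD : IsDominatingCliqueSetOn G W i D) : domNumOn G W i ≤ #D :=
  Nat.sInf_le ⟨D, hD, rfl⟩

lemma domNumOn_univ [Fintype V] (i : ℕ) : domNumOn G univ i = domNum G i := by
  simp [domNumOn, domNum, IsDominatingCliqueSetOn, IsDominatingCliqueSet, IsMaxCliqueWithin,
    IsMaxCliqueOf]

variable {W : Finset V} {v : V}

lemma IsSimplicialIn.isMaxCliqueWithin_insert (hsimp : IsSimplicialIn G W v) (hv : v ∈ W) :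
    IsMaxCliqueWithin G W (insert v {x ∈ W | G.Adj v x}) := by
  refine ⟨insert_subset hv (filter_subset _ _), ?_, fun u huW hu hsub => ?_⟩
  · rw [coe_insert]
    exact hsimp.insert fun x hx _ => (mem_filter.mp hx).2
  · refine hsub.antisymm fun x hx => ?_
    rcases eq_or_ne x v with rfl | hxv
    · exact mem_insert_self _ _
    · exact mem_insert_of_mem
        (mem_filter.mpr ⟨huW hx, hu (hsub (mem_insert_self _ _)) hx hxv.symm⟩)

lemma IsMaxCliqueWithin.of_erase (hsimp : IsSimplicialIn G W v) {t : Finset V}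
    (ht : IsMaxCliqueWithin G (W.erase v) t) :
    IsMaxCliqueWithin G W t ∨ t = {x ∈ W | G.Adj v x} := by
  obtain ⟨htW, htc, htmax⟩ := ht
  by_cases htN : t ⊆ {x ∈ W | G.Adj v x}
  · refine .inr (htmax _ (fun x hx => mem_erase.mpr ⟨?_, (mem_filter.mp hx).1⟩) hsimp htN)
    rintro rfl
    exact G.irrefl (mem_filter.mp hx).2
  refine .inl ⟨htW.trans (erase_subset _ _), htc, fun u huW hu htu => htmax u ?_ hu htu⟩
  intro x hx
  refine mem_erase.mpr ⟨?_, huW hx⟩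
  rintro rfl
  refine htN fun y hy => mem_filter.mpr ⟨(mem_erase.mp (htW hy)).2, hu hx (htu hy) ?_⟩
  exact (mem_erase.mp (htW hy)).1.symm

lemma IsDominatingCliqueSetOn.filter_erase (hsimp : IsSimplicialIn G W v) {i : ℕ}
    {D : Finset (Finset V)} (hD : IsDominatingCliqueSetOn G W i D)
    (hi : #{x ∈ W | G.Adj v x} < i) :
    IsDominatingCliqueSetOn G (W.erase v) i {s ∈ D | v ∉ s} := by
  refine ⟨fun s hs => hD.1 s (mem_filter.mp hs).1, fun t ht hit => ?_⟩
  rcases ht.of_erase hsimp with ht' | rfl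
  · obtain ⟨s, hs, hst⟩ := hD.2 t ht' hit
    exact ⟨s, mem_filter.mpr ⟨hs, fun h => (mem_erase.mp (ht.1 (hst h))).1 rfl⟩, hst⟩
  · omega

lemma IsDominatingCliqueSetOn.image_erase (hsimp : IsSimplicialIn G W v) (hv : v ∈ W) {i : ℕ}
    {D : Finset (Finset V)} (hD : IsDominatingCliqueSetOn G W i D) {T : Finset V}
    (hT : T ⊆ {x ∈ W | G.Adj v x}) (hTi : #T = i) :
    IsDominatingCliqueSetOn G (W.erase v) i (D.image fun s => if v ∈ s then T else s) := by
  refine ⟨fun s hs => ?_, fun t ht hit => ?_⟩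
  · obtain ⟨s', hs', rfl⟩ := mem_image.mp hs
    split_ifs
    · exact ⟨hsimp.subset (coe_subset.mpr hT), hTi⟩
    · exact hD.1 s' hs'
  rcases ht.of_erase hsimp with ht' | rfl
  · obtain ⟨s, hs, hst⟩ := hD.2 t ht' hit
    have hvs : v ∉ s := fun h => (mem_erase.mp (ht.1 (hst h))).1 rfl
    exact ⟨s, mem_image.mpr ⟨s, hs, if_neg hvs⟩, hst⟩
  · obtain ⟨s, hs, hsQ⟩ := hD.2 _ (hsimp.isMaxCliqueWithin_insert hv)
      (hit.trans (card_le_card (subset_insert _ _)))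
    refine ⟨if v ∈ s then T else s, mem_image_of_mem _ hs, ?_⟩
    split_ifs with hvs
    · exact hT
    · exact (subset_insert_iff_of_notMem hvs).mp hsQ

lemma IsSimplicialIn.domNumOn_erase_add_le (hsimp : IsSimplicialIn G W v) (hv : v ∈ W) (j : ℕ) :
    domNumOn G (W.erase v) (j + 1) + (if j = #{x ∈ W | G.Adj v x} then 1 else 0) ≤
      domNumOn G W (j + 1) := by
  obtain ⟨D, hD, hDcard⟩ := exists_isDominatingCliqueSetOn_card_eq G W (j + 1)
  rw [← hDcard]
  rcases lt_trichotomy j #{x ∈ W | G.Adj v x} with hlt | rfl | hgt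
  · obtain ⟨T, hTN, hT⟩ := exists_subset_card_eq (show j + 1 ≤ #{x ∈ W | G.Adj v x} by omega)
    rw [if_neg hlt.ne, add_zero]
    exact (domNumOn_le_card (hD.image_erase hsimp hv hTN hT)).trans card_image_le
  · rw [if_pos rfl]
    have hvN : v ∉ {x ∈ W | G.Adj v x} := fun h => G.irrefl (mem_filter.mp h).2
    -- the maximal clique `N[v]` must be dominated by itself
    obtain ⟨s, hs, hsQ⟩ := hD.2 _ (hsimp.isMaxCliqueWithin_insert hv)
      (card_insert_of_notMem hvN).ge
    have hvs : v ∈ s := by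
      by_contra hvs
      have := card_le_card ((subset_insert_iff_of_notMem hvs).mp hsQ)
      rw [(hD.1 s hs).card_eq] at this
      omega
    have := card_lt_card ((filter_ssubset (p := fun s => v ∉ s)).mpr ⟨s, hs, fun h => h hvs⟩)
    have := domNumOn_le_card (hD.filter_erase hsimp (Nat.lt_succ_self _))
    omega
  · rw [if_neg hgt.ne', add_zero]
    exact (domNumOn_le_card (hD.filter_erase hsimp (by omega))).trans (card_filter_le _ _)

theorem IsChordal.coeff_bPolyOn_le_domNumOn (hG : IsChordal G) (W : Finset V) (j : ℕ) :
    (bPolyOn G W).coeff j ≤ domNumOn G W (j + 1) := by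
  induction W using Finset.strongInduction generalizing j with
  | H W ih =>
  rcases W.eq_empty_or_nonempty with rfl | hW
  · simp [bPolyOn]
  obtain ⟨v, hv, hsimp⟩ := hG.exists_isSimplicialIn hW
  have hb := ih _ (erase_ssubset hv) j
  have hd := hsimp.domNumOn_erase_add_le hv j
  rw [hsimp.coeff_bPolyOn_eq_add hv]
  split_ifs at hd ⊢ <;> omega

end Domination

theorem stmt2_general {V : Type} [Fintype V] (G : SimpleGraph V)
    (hch : IsChordal G)
    (d : ℕ)
    (hdmax : ∀ (m : ℕ) (s : Finset V), G.IsNClique m s → m ≤ d)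
    (b : ℕ → ℤ)
    (hb : ∀ x : ℤ, ∑ i ∈ Finset.Icc 1 d, b i * (x + 1) ^ (i - 1) =
      ∑ i ∈ Finset.Icc 1 d, (cliqueCount G i : ℤ) * x ^ (i - 1))
    (i : ℕ) (hi1 : 1 ≤ i) (hi2 : i ≤ d) :
    b i ≤ (domNum G i : ℤ) := by
  have hcoeff : (bPolyOn G univ).coeff (i - 1) = b i := by
    rw [bPolyOn_univ hdmax hb, Polynomial.finsetSum_coeff, sum_eq_single i]
    · simp
    · intro k hk hki
      rw [Polynomial.coeff_C_mul_X_pow, if_neg (by rw [mem_Icc] at hk; omega)]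
    · simp [hi1, hi2]
  have := hch.coeff_bPolyOn_le_domNumOn univ (i - 1)
  rwa [hcoeff, Nat.sub_add_cancel hi1, domNumOn_univ] at this

/-- For a non-complete chordal graph `G` with largest clique size `d` and `b`-vector `b`,
one has `b i ≤ d_i(G)` for every `1 ≤ i ≤ d`. -/
theorem stmt2 {V : Type} [Fintype V] [DecidableEq V] (G : SimpleGraph V)
    (hnc : G ≠ ⊤) (hch : IsChordal G)
    (d : ℕ) (hd : ∃ s : Finset V, G.IsNClique d s)
    (hdmax : ∀ (m : ℕ) (s : Finset V), G.IsNClique m s → m ≤ d)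
    (b : ℕ → ℤ)
    (hb : ∀ x : ℤ, ∑ i ∈ Finset.Icc 1 d, b i * (x + 1) ^ (i - 1) =
      ∑ i ∈ Finset.Icc 1 d, (cliqueCount G i : ℤ) * x ^ (i - 1))
    (i : ℕ) (hi1 : 1 ≤ i) (hi2 : i ≤ d) :
    b i ≤ (domNum G i : ℤ) :=
  stmt2_general G hch d hdmax b hb i hi1 hi2
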